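/- For a natural number n ≥ 1, max{ψ(a_n), ψ(a_n+1)} = √(n+1) if and only if √(n+1) is an integer, where a_n = ⌊(n+1)/2 − √(n+1)/2⌋ and ψ(t) = (2√n/(n+1))·√(t(n+1−t)) + |1 − 2t/(n+1)|. -/

import Mathlib

/-!
Write `N = n + 1`. Then `N ψ(t) = √n · 2√(t(N - t)) + 1 · |N - 2t|`, where `(√n)² + 1² = N` and
`(2√(t(N - t)))² + |N - 2t|² = N²` on `[0, N]`, so Cauchy–Schwarz (in the form of Lagrange's
identity) gives `ψ ≤ √N`, with equality exactly when `(N - 2t)² = N`. At an integer `t` this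
forces `√N = |N - 2t| ∈ ℤ`. Conversely, if `√N = k ∈ ℤ` then `(N - √N)/2 = (k² - k)/2` is an
integer, so `a_n` equals it, `N - 2a_n = k`, and the maximum `√N` is attained at `a_n`.
-/

noncomputable def psi (n : ℕ) (t : ℝ) : ℝ :=
  (2 * Real.sqrt n / (n + 1)) * Real.sqrt (t * (n + 1 - t)) + |1 - 2 * t / (n + 1)|

noncomputable def a (n : ℕ) : ℤ := ⌊(n + 1 : ℝ) / 2 - Real.sqrt (n + 1) / 2⌋

section psi

variable {n : ℕ} {t : ℝ}

lemma psi_nonneg : 0 ≤ psi n t := by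
  unfold psi
  positivity

lemma mul_psi_eq (n : ℕ) (t : ℝ) :
    (n + 1) * psi n t = √n * (2 * √(t * (n + 1 - t))) + 1 * |n + 1 - 2 * t| := by
  have hN : (0 : ℝ) < n + 1 := by positivity
  have h : 1 - 2 * t / (n + 1) = (n + 1 - 2 * t) / (n + 1) := by field_simp
  rw [psi, h, abs_div, abs_of_pos hN]
  field_simp

lemma sq_mul_psi_add_sq (ht₀ : 0 ≤ t) (ht : t ≤ n + 1) :
    ((n + 1) * psi n t) ^ 2 + (√n * |n + 1 - 2 * t| - 1 * (2 * √(t * (n + 1 - t)))) ^ 2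
      = (n + 1) ^ 3 := by
  have hn : √n ^ 2 = n := Real.sq_sqrt n.cast_nonneg
  have hu : √(t * (n + 1 - t)) ^ 2 = t * (n + 1 - t) := Real.sq_sqrt (by nlinarith)
  have hs : |(n : ℝ) + 1 - 2 * t| ^ 2 = (n + 1 - 2 * t) ^ 2 := sq_abs _
  have lagrange := sq_add_sq_mul_sq_add_sq (x₁ := √n) (x₂ := 1)
    (y₁ := |(n : ℝ) + 1 - 2 * t|) (y₂ := 2 * √(t * (n + 1 - t)))
  rw [mul_psi_eq]
  linear_combination -lagrange + (|(n : ℝ) + 1 - 2 * t| ^ 2 + 4 * √(t * (n + 1 - t)) ^ 2) * hn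
    + 4 * (n + 1) * hu + (n + 1) * hs

lemma psi_le_sqrt (ht₀ : 0 ≤ t) (ht : t ≤ n + 1) : psi n t ≤ √(n + 1) := by
  have hN : (0 : ℝ) < n + 1 := by positivity
  have h : (n + 1) ^ 2 * psi n t ^ 2 ≤ (n + 1) ^ 2 * (n + 1) := by
    nlinarith [sq_mul_psi_add_sq ht₀ ht,
      sq_nonneg (√n * |n + 1 - 2 * t| - 1 * (2 * √(t * (n + 1 - t))))]
  rw [Real.le_sqrt psi_nonneg hN.le]
  exact le_of_mul_le_mul_left h (by positivity)

lemma psi_eq_sqrt_iff (ht₀ : 0 ≤ t) (ht : t ≤ n + 1) :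
    psi n t = √(n + 1) ↔ ((n : ℝ) + 1 - 2 * t) ^ 2 = n + 1 := by
  have hN : (0 : ℝ) < n + 1 := by positivity
  have hn : √n ^ 2 = n := Real.sq_sqrt n.cast_nonneg
  have hu : √(t * (n + 1 - t)) ^ 2 = t * (n + 1 - t) := Real.sq_sqrt (by nlinarith)
  calc psi n t = √(n + 1) ↔ ((n + 1) * psi n t) ^ 2 = (n + 1) ^ 3 := by
        rw [eq_comm, Real.sqrt_eq_iff_eq_sq hN.le psi_nonneg, mul_pow]
        constructor <;> intro h
        · rw [← h]; ring
        · exact mul_left_cancel₀ (pow_ne_zero 2 hN.ne') (by rw [h]; ring)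
    _ ↔ √n * |n + 1 - 2 * t| = 2 * √(t * (n + 1 - t)) := by
        rw [← sq_mul_psi_add_sq ht₀ ht, left_eq_add, sq_eq_zero_iff, sub_eq_zero, one_mul]
    _ ↔ (√n * |n + 1 - 2 * t|) ^ 2 = (2 * √(t * (n + 1 - t))) ^ 2 :=
        (sq_eq_sq₀ (by positivity) (by positivity)).symm
    _ ↔ ((n : ℝ) + 1 - 2 * t) ^ 2 = n + 1 := by
        rw [mul_pow, mul_pow, hn, hu, sq_abs]
        constructor <;> intro h
        · exact mul_left_cancel₀ hN.ne' (by linear_combination h)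
        · linear_combination (n + 1) * h

lemma exists_intCast_eq_sqrt_of_psi_eq (m : ℤ) (hm₀ : (0 : ℝ) ≤ m) (hm : (m : ℝ) ≤ n + 1)
    (h : psi n m = √(n + 1)) : ∃ k : ℤ, (k : ℝ) = √(n + 1) :=
  ⟨|n + 1 - 2 * m|, by
    rw [(psi_eq_sqrt_iff hm₀ hm).1 h |>.symm, Real.sqrt_sq_eq_abs]
    push_cast
    rfl⟩

end psi

lemma a_nonneg (n : ℕ) : 0 ≤ a n := by
  have h₁ : 1 ≤ √((n : ℝ) + 1) := Real.one_le_sqrt.mpr (by simp)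
  have h₂ : √((n : ℝ) + 1) ^ 2 = n + 1 := Real.sq_sqrt (by positivity)
  have h : √((n : ℝ) + 1) ≤ n + 1 := by nlinarith
  exact Int.floor_nonneg.mpr (by linarith)

lemma a_add_one_le (n : ℕ) : (a n : ℝ) + 1 ≤ n + 1 := by
  have h : 1 ≤ √((n : ℝ) + 1) := Real.one_le_sqrt.mpr (by simp)
  have hfloor := Int.floor_le ((n + 1 : ℝ) / 2 - √(n + 1) / 2)
  rw [← a] at hfloor
  linarith [(n.cast_nonneg : (0 : ℝ) ≤ n)]

lemma sub_two_mul_a_eq {n : ℕ} {k : ℤ} (hk : (k : ℝ) = √(n + 1)) : (n + 1 : ℝ) - 2 * a n = k := by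
  have hk₂ : (k : ℝ) ^ 2 = n + 1 := by rw [hk, Real.sq_sqrt (by positivity)]
  obtain ⟨m, hm⟩ := Int.even_mul_pred_self k
  have hm' : (k : ℝ) * (k - 1) = m + m := by exact_mod_cast hm
  have ha : a n = m := by
    rw [a, ← hk, show (n + 1 : ℝ) / 2 - k / 2 = m by linear_combination (-hk₂ + hm') / 2,
      Int.floor_intCast]
  rw [ha]
  linear_combination -hk₂ + hm'

theorem stmt4_general (n : ℕ) :
    max (psi n (a n)) (psi n (a n + 1)) = Real.sqrt (n + 1) ↔
      ∃ k : ℤ, (k : ℝ) = Real.sqrt (n + 1) := by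
  have ha₀ : (0 : ℝ) ≤ a n := by exact_mod_cast a_nonneg n
  have ha₁ := a_add_one_le n
  constructor
  · intro h
    rcases max_choice (psi n (a n)) (psi n (a n + 1)) with hmax | hmax <;> rw [hmax] at h
    · exact exists_intCast_eq_sqrt_of_psi_eq (a n) ha₀ (by linarith) h
    · exact exists_intCast_eq_sqrt_of_psi_eq (a n + 1) (by push_cast; linarith)
        (by push_cast; exact ha₁) (by push_cast; exact h)
  · rintro ⟨k, hk⟩
    have hpsi : psi n (a n) = √(n + 1) := (psi_eq_sqrt_iff ha₀ (by linarith)).2 <| by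
      rw [sub_two_mul_a_eq hk, hk, Real.sq_sqrt (by positivity)]
    rw [hpsi]
    exact max_eq_left (psi_le_sqrt (by linarith) ha₁)

theorem stmt4 (n : ℕ) (hn : 1 ≤ n) :
    max (psi n (a n)) (psi n (a n + 1)) = Real.sqrt (n + 1) ↔
      ∃ k : ℤ, (k : ℝ) = Real.sqrt (n + 1) :=
  stmt4_general n
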